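/- arXiv:0802.3444 — 3 statements merged into one kernel-verified Lean document; each statement's English description precedes it below -/
import Mathlib

section
/- Soundness of resolution: let R = (H ⇒ C) and R' = (H' ⇒ C') be Horn clauses, F0 ∈ H' a hypothesis such that C and F0 are unifiable with most general unifier σ, and define R'' = R ∘_{F0} R' = (σ(H ∪ (H' \ {F0})) ⇒ σC'). Then any closed fact derivable using R'' (together with a set of clauses S) is also derivable using R and R' (together with S). -/
/-- First-order terms over function symbols `F`, with natural-number variables. -/
inductive Trm (F : Type) : Type
  | var : Nat → Trm F
  | app : F → List (Trm F) → Trm F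

namespace Trm

variable {F : Type}

/-- Homomorphic extension of a substitution to terms. -/
def subst (σ : Nat → Trm F) : Trm F → Trm F
  | var x => σ x
  | app f ts => app f (ts.attach.map (fun t => subst σ t.1))
decreasing_by
  simp_wf
  have := List.sizeOf_lt_of_mem t.2
  omega

/-- `VarOcc x t` : variable `x` occurs in term `t`. -/
inductive VarOcc (x : Nat) : Trm F → Prop
  | var : VarOcc x (var x)
  | app {f : F} {ts : List (Trm F)} {t : Trm F} : t ∈ ts → VarOcc x t → VarOcc x (app f ts)

end Trm

/-- A term is closed when no variable occurs in it. -/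
def ClosedT {F : Type} (t : Trm F) : Prop := ∀ x, ¬ Trm.VarOcc x t

/-- A fact is an atom `P(t1,...,tn)`. -/
structure Fct (P F : Type) where
  pred : P
  args : List (Trm F)

def Fct.subst {P F : Type} (σ : Nat → Trm F) (a : Fct P F) : Fct P F :=
  ⟨a.pred, a.args.map (Trm.subst σ)⟩

def Fct.Closed {P F : Type} (a : Fct P F) : Prop := ∀ t ∈ a.args, ClosedT t

def Fct.VarOcc {P F : Type} (x : Nat) (a : Fct P F) : Prop := ∃ t ∈ a.args, Trm.VarOcc x t

/-- A Horn clause: a finite multiset of hypotheses and a conclusion. -/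
structure Clause (P F : Type) where
  hyp : Multiset (Fct P F)
  concl : Fct P F

/-- `(H1 ⇒ C1)` subsumes `(H2 ⇒ C2)` iff some substitution σ has `σ C1 = C2` and `σ H1 ⊆ H2`. -/
def Subsumes {P F : Type} (c1 c2 : Clause P F) : Prop :=
  ∃ σ : Nat → Trm F, Fct.subst σ c1.concl = c2.concl ∧ c1.hyp.map (Fct.subst σ) ≤ c2.hyp

/-- Derivability of a closed fact via a finite derivation tree: each node is labeled by a
clause of `R` that subsumes the local inference `{labels of outgoing edges} ⇒ label of
incoming edge`. -/
inductive DTree {P F : Type} (R : Set (Clause P F)) : Fct P F → Prop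
  | node (cl : Clause P F) (hs : Multiset (Fct P F)) (C : Fct P F) :
      cl ∈ R → Subsumes cl ⟨hs, C⟩ → (∀ f ∈ hs, DTree R f) → DTree R C

theorem Trm.subst_app {F : Type} (σ : Nat → Trm F) (f : F) (ts : List (Trm F)) :
    Trm.subst σ (Trm.app f ts) = Trm.app f (ts.map (Trm.subst σ)) := by
  rw [Trm.subst, List.attach_map_val (f := Trm.subst σ)]

theorem Trm.subst_subst {F : Type} (δ σ : Nat → Trm F) (t : Trm F) :
    Trm.subst δ (Trm.subst σ t) = Trm.subst (fun x => Trm.subst δ (σ x)) t := by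
  induction t using Trm.subst.induct with
  | case1 x => simp only [Trm.subst]
  | case2 f ts ih =>
    simp only [Trm.subst_app, List.map_map]
    exact congrArg _ (List.map_congr_left fun t ht => ih ⟨t, ht⟩)

theorem Fct.subst_subst {P F : Type} (δ σ : Nat → Trm F) (a : Fct P F) :
    Fct.subst δ (Fct.subst σ a) = Fct.subst (fun x => Trm.subst δ (σ x)) a := by
  simp [Fct.subst, Trm.subst_subst]

section Derivability

variable {P F : Type}

def Admissible (R : Set (Clause P F)) (c : Clause P F) : Prop :=
  ∀ τ : Nat → Trm F, (∀ f ∈ c.hyp, DTree R (f.subst τ)) → DTree R (c.concl.subst τ)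

theorem DTree.mono {R R' : Set (Clause P F)} (hRR' : R ⊆ R') {G : Fct P F} (h : DTree R G) :
    DTree R' G := by
  induction h with
  | node cl hs C hcl hsub _ ih => exact .node cl hs C (hRR' hcl) hsub ih

theorem admissible_of_mem {R : Set (Clause P F)} {c : Clause P F} (hc : c ∈ R) :
    Admissible R c :=
  fun τ hhyp => .node c (c.hyp.map (Fct.subst τ)) _ hc ⟨τ, rfl, le_rfl⟩ fun _ hf => by
    obtain ⟨f, hf', rfl⟩ := Multiset.mem_map.mp hf
    exact hhyp f hf'

theorem DTree.of_insert_admissible {R : Set (Clause P F)} {c : Clause P F}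
    (hc : Admissible R c) {G : Fct P F} (h : DTree (insert c R) G) : DTree R G := by
  induction h with
  | node cl hs C hcl hsub _ ih =>
    obtain ⟨τ, rfl, hle⟩ := hsub
    rcases hcl with rfl | hcl
    · exact hc τ fun f hf => ih _ (Multiset.subset_of_le hle (Multiset.mem_map_of_mem _ hf))
    · exact .node cl hs _ hcl ⟨τ, rfl, hle⟩ ih

/-- An instance `τ` of the resolvent is obtained by applying `(H ⇒ C)` and then
`(F0 :: H'0 ⇒ C')`, both instantiated by `τ ∘ σ`: since `σ` unifies `C` and `F0`, the
conclusion of the first is the hypothesis `F0` of the second. -/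
theorem admissible_resolvent {R : Set (Clause P F)} {H H'0 : Multiset (Fct P F)}
    {C C' F0 : Fct P F} (hR : ⟨H, C⟩ ∈ R) (hR' : ⟨F0 ::ₘ H'0, C'⟩ ∈ R)
    {σ : Nat → Trm F} (hunif : Fct.subst σ C = Fct.subst σ F0) :
    Admissible R ⟨(H + H'0).map (Fct.subst σ), Fct.subst σ C'⟩ := by
  intro τ hhyp
  have hhyp' : ∀ f ∈ H + H'0, DTree R (f.subst fun x => Trm.subst τ (σ x)) := fun f hf => by
    rw [← Fct.subst_subst]
    exact hhyp _ (Multiset.mem_map_of_mem _ hf)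
  have hC : DTree R (C.subst fun x => Trm.subst τ (σ x)) :=
    admissible_of_mem hR _ fun f hf => hhyp' f (Multiset.mem_add.mpr (.inl hf))
  rw [Fct.subst_subst]
  refine admissible_of_mem hR' _ fun f hf => ?_
  rcases Multiset.mem_cons.mp hf with rfl | hf
  · rwa [← Fct.subst_subst, ← hunif, Fct.subst_subst]
  · exact hhyp' f (Multiset.mem_add.mpr (.inr hf))

end Derivability

theorem resolution_sound_general {P F : Type}
    (H H'0 : Multiset (Fct P F)) (C C' F0 : Fct P F)
    (σ : Nat → Trm F)
    (hunif : Fct.subst σ C = Fct.subst σ F0)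
    (S : Set (Clause P F)) (G : Fct P F)
    (h : DTree (insert ⟨(H + H'0).map (Fct.subst σ), Fct.subst σ C'⟩ S) G) :
    DTree (insert ⟨H, C⟩ (insert ⟨F0 ::ₘ H'0, C'⟩ S)) G := by
  have hres : Admissible (insert ⟨H, C⟩ (insert ⟨F0 ::ₘ H'0, C'⟩ S)) _ :=
    admissible_resolvent (Set.mem_insert _ _) (Set.mem_insert_of_mem _ (Set.mem_insert _ _)) hunif
  have hS : S ⊆ insert ⟨H, C⟩ (insert ⟨F0 ::ₘ H'0, C'⟩ S) :=
    (Set.subset_insert _ _).trans (Set.subset_insert _ _)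
  exact DTree.of_insert_admissible hres (h.mono (Set.insert_subset_insert hS))

/-- Soundness of resolution: if `R = (H ⇒ C)`, `R' = (H' ⇒ C')` with `F0 ∈ H'`
(here `H' = F0 ::ₘ H'0`), `C` and `F0` are unifiable with most general unifier `σ`, and
`R'' = (σ(H ∪ (H' \ {F0})) ⇒ σC')` is the resolvent, then any closed fact derivable using
`R''` together with a clause set `S` is also derivable using `R` and `R'` together with `S`. -/
theorem resolution_sound {P F : Type}
    (H H'0 : Multiset (Fct P F)) (C C' F0 : Fct P F)
    (σ : Nat → Trm F)
    (hunif : Fct.subst σ C = Fct.subst σ F0)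
    (hmgu : ∀ δ : Nat → Trm F, Fct.subst δ C = Fct.subst δ F0 →
      ∃ δ' : Nat → Trm F, ∀ x, δ x = Trm.subst δ' (σ x))
    (S : Set (Clause P F)) (G : Fct P F) (hG : G.Closed)
    (h : DTree (insert ⟨(H + H'0).map (Fct.subst σ), Fct.subst σ C'⟩ S) G) :
    DTree (insert ⟨H, C⟩ (insert ⟨F0 ::ₘ H'0, C'⟩ S)) G :=
  resolution_sound_general H H'0 C C' F0 σ hunif S G h
end

section
/- A closed fact F is derivable from a set of Horn clauses R (in classical first-order logic, treating clauses as universally quantified implications) if and only if there exists a finite derivation tree of F from R (where each internal node labeled by a clause R' with incoming edge F0 and outgoing edges F1,...,Fn satisfies that R' subsumes {F1,...,Fn} ⇒ F0). -/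
/-- A first-order structure interpreting function and predicate symbols. -/
structure Struc (P F : Type) where
  carrier : Type
  interpF : F → List carrier → carrier
  interpP : P → List carrier → Prop

/-- Evaluation of a term in a structure under a valuation of the variables. -/
def evalT {P F : Type} (M : Struc P F) (v : Nat → M.carrier) : Trm F → M.carrier
  | .var x => v x
  | .app f ts => M.interpF f (ts.attach.map (fun t => evalT M v t.1))
decreasing_by
  simp_wf
  have := List.sizeOf_lt_of_mem t.2
  omega

/-- Truth of a fact in a structure under a valuation. -/
def evalFct {P F : Type} (M : Struc P F) (v : Nat → M.carrier) (a : Fct P F) : Prop :=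
  M.interpP a.pred (a.args.map (evalT M v))

/-- A structure satisfies the universal closure of a clause. -/
def SatClause {P F : Type} (M : Struc P F) (c : Clause P F) : Prop :=
  ∀ v : Nat → M.carrier, (∀ f ∈ c.hyp, evalFct M v f) → evalFct M v c.concl

/-!
Soundness is induction on the tree: at a node, the clause instantiated by the subsumption
substitution `σ` is true under the valuation `x ↦ ⟦σ x⟧_v`. For completeness, take the
Herbrand model on terms in which a fact holds iff it has a derivation tree; every clause of
`R` is true there, and evaluating `Fc` under the valuation `Trm.var` yields its tree.
-/

namespace Trm

variable {F : Type}

@[simp]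
lemma subst_app_s2 (σ : Nat → Trm F) (f : F) (ts : List (Trm F)) :
    subst σ (app f ts) = app f (ts.map (subst σ)) := by
  rw [subst]
  simp

lemma subst_var_self (t : Trm F) : subst var t = t := by
  induction t using subst.induct with
  | case1 x => rw [subst]
  | case2 f ts ih => rw [subst_app_s2, List.map_congr_left (fun t ht => ih ⟨t, ht⟩), List.map_id']

end Trm

lemma Fct.subst_var_self {P F : Type} (a : Fct P F) : a.subst Trm.var = a := by
  simp [Fct.subst, funext Trm.subst_var_self]

section Semantics

variable {P F : Type} (M : Struc P F)

@[simp]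
lemma evalT_app (v : Nat → M.carrier) (f : F) (ts : List (Trm F)) :
    evalT M v (.app f ts) = M.interpF f (ts.map (evalT M v)) := by
  rw [evalT]
  simp

lemma evalT_subst (v : Nat → M.carrier) (σ : Nat → Trm F) (t : Trm F) :
    evalT M v (t.subst σ) = evalT M (fun x => evalT M v (σ x)) t := by
  induction t using Trm.subst.induct with
  | case1 x => simp [Trm.subst, evalT]
  | case2 f ts ih =>
    simp only [Trm.subst_app_s2, evalT_app, List.map_map]
    exact congrArg _ (List.map_congr_left fun t ht => ih ⟨t, ht⟩)

lemma evalFct_subst (v : Nat → M.carrier) (σ : Nat → Trm F) (a : Fct P F) :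
    evalFct M v (a.subst σ) ↔ evalFct M (fun x => evalT M v (σ x)) a := by
  simp [evalFct, Fct.subst, Function.comp_def, evalT_subst]

theorem DTree.sound {R : Set (Clause P F)} {C : Fct P F} (h : DTree R C) {M : Struc P F}
    (hM : ∀ c ∈ R, SatClause M c) (v : Nat → M.carrier) : evalFct M v C := by
  induction h with
  | node cl hs C hcl hsub _ ih =>
    obtain ⟨σ, rfl, hhyp⟩ := hsub
    rw [evalFct_subst]
    refine hM cl hcl _ fun f hf => ?_
    rw [← evalFct_subst]
    exact ih _ (Multiset.mem_of_le hhyp (Multiset.mem_map_of_mem _ hf))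

end Semantics

section Herbrand

variable {P F : Type} (R : Set (Clause P F))

abbrev herbrand : Struc P F :=
  ⟨Trm F, Trm.app, fun p ts => DTree R ⟨p, ts⟩⟩

lemma evalT_herbrand (v : Nat → Trm F) (t : Trm F) : evalT (herbrand R) v t = t.subst v := by
  induction t using Trm.subst.induct with
  | case1 x => rw [Trm.subst, evalT]
  | case2 f ts ih =>
    rw [Trm.subst_app_s2, evalT_app]
    exact congrArg _ (List.map_congr_left fun t ht => ih ⟨t, ht⟩)

lemma evalFct_herbrand (v : Nat → Trm F) (a : Fct P F) :
    evalFct (herbrand R) v a ↔ DTree R (a.subst v) := by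
  simp only [evalFct, Fct.subst, funext (evalT_herbrand R v)]

lemma satClause_herbrand {c : Clause P F} (hc : c ∈ R) : SatClause (herbrand R) c := by
  intro v hhyp
  rw [evalFct_herbrand]
  refine DTree.node c (c.hyp.map (Fct.subst v)) _ hc ⟨v, rfl, le_rfl⟩ ?_
  simpa [← evalFct_herbrand] using hhyp

end Herbrand

theorem derivable_iff_derivation_tree_general {P F : Type}
    (R : Set (Clause P F)) (Fc : Fct P F) :
    (∀ M : Struc P F, (∀ c ∈ R, SatClause M c) → ∀ v : Nat → M.carrier, evalFct M v Fc) ↔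
      DTree R Fc := by
  refine ⟨fun h => ?_, fun h M hM v => h.sound hM v⟩
  have := h (herbrand R) (fun c hc => satClause_herbrand R hc) Trm.var
  rwa [evalFct_herbrand, Fct.subst_var_self] at this

/-- A closed fact `Fc` is a logical consequence (in classical first-order logic) of the
universal closures of the clauses of `R` if and only if there is a finite derivation tree
of `Fc` from `R`. -/
theorem derivable_iff_derivation_tree {P F : Type}
    (R : Set (Clause P F)) (Fc : Fct P F) (hFc : Fc.Closed) :
    (∀ M : Struc P F, (∀ c ∈ R, SatClause M c) → ∀ v : Nat → M.carrier, evalFct M v Fc) ↔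
      DTree R Fc :=
  derivable_iff_derivation_tree_general R Fc
end

section
/- Let R = (attacker(x) ∧ H ⇒ C) be a clause where the variable x does not occur in H or C, and let R' = (H ⇒ C). Then for any clause set S containing a clause (∅ ⇒ attacker(p0)) with attacker(p0) a closed fact, and any closed fact F, F is derivable from S ∪ {R} iff F is derivable from S ∪ {R'}. -/
/-- Least-fixed-point derivability of closed facts: `σC` is derivable whenever `H ⇒ C ∈ R`
and every fact of `σH` is a derivable closed fact. -/
inductive Deriv {P F : Type} (R : Set (Clause P F)) : Fct P F → Prop
  | step (cl : Clause P F) (σ : Nat → Trm F) :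
      cl ∈ R → (∀ f ∈ cl.hyp, (Fct.subst σ f).Closed) →
      (∀ f ∈ cl.hyp, Deriv R (Fct.subst σ f)) →
      Deriv R (Fct.subst σ cl.concl)

theorem Trm.subst_congr {F : Type} (σ σ' : Nat → Trm F) :
    ∀ t : Trm F, (∀ y, Trm.VarOcc y t → σ y = σ' y) → Trm.subst σ t = Trm.subst σ' t
  | .var x, h => by rw [Trm.subst, Trm.subst]; exact h x .var
  | .app f ts, h => by
      rw [Trm.subst, Trm.subst]
      congr 1
      apply List.map_congr_left
      intro a _
      exact Trm.subst_congr σ σ' a.1 (fun y hy => h y (.app a.2 hy))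
decreasing_by
  simp_wf
  have := List.sizeOf_lt_of_mem a.2
  omega

theorem Trm.subst_closed {F : Type} (σ : Nat → Trm F) :
    ∀ t : Trm F, ClosedT t → Trm.subst σ t = t
  | .var x, h => absurd .var (h x)
  | .app f ts, h => by
      rw [Trm.subst]
      have : ts.attach.map (fun t => Trm.subst σ t.1) = ts.attach.map (fun t => t.1) := by
        apply List.map_congr_left
        intro a _
        exact Trm.subst_closed σ a.1 (fun y hy => (h y) (.app a.2 hy))
      rw [this]
      simp
decreasing_by
  simp_wf
  have := List.sizeOf_lt_of_mem a.2
  omega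

theorem Fct.subst_congr {P F : Type} (σ σ' : Nat → Trm F) (a : Fct P F)
    (h : ∀ y, Fct.VarOcc y a → σ y = σ' y) : Fct.subst σ a = Fct.subst σ' a := by
  unfold Fct.subst
  congr 1
  apply List.map_congr_left
  intro t ht
  exact Trm.subst_congr σ σ' t (fun y hy => h y ⟨t, ht, hy⟩)

theorem Fct.subst_closed {P F : Type} (σ : Nat → Trm F) (a : Fct P F)
    (h : a.Closed) : Fct.subst σ a = a := by
  unfold Fct.subst
  cases a with
  | mk p args =>
    simp only [mk.injEq, true_and]
    conv_rhs => rw [← List.map_id args]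
    apply List.map_congr_left
    intro t ht
    exact Trm.subst_closed σ t (h t ht)

/-- Elimination of `attacker(x)` hypotheses: if `S` contains a hypothesis-free clause
concluding a closed fact `attacker(p0)`, `R = (attacker(x) ∧ H ⇒ C)` with `x` occurring
neither in `H` nor in `C`, and `R' = (H ⇒ C)`, then the same closed facts are derivable
from `S ∪ {R}` and from `S ∪ {R'}`. -/
theorem elim_attacker_var_hyp {P F : Type} (att : P)
    (S : Set (Clause P F)) (p0 : Trm F) (hp0 : ClosedT p0)
    (hS : (⟨0, ⟨att, [p0]⟩⟩ : Clause P F) ∈ S)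
    (x : Nat) (H : Multiset (Fct P F)) (C : Fct P F)
    (hxH : ∀ f ∈ H, ¬ Fct.VarOcc x f) (hxC : ¬ Fct.VarOcc x C)
    (G : Fct P F) (hG : G.Closed) :
    Deriv (insert (⟨(⟨att, [Trm.var x]⟩ : Fct P F) ::ₘ H, C⟩ : Clause P F) S) G ↔
      Deriv (insert (⟨H, C⟩ : Clause P F) S) G := by
  constructor
  · intro hd
    induction hd with
    | step cl σ hcl hclosed hder ih =>
      rcases Set.mem_insert_iff.mp hcl with rfl | hmem
      · -- the clause is R
        exact Deriv.step ⟨H, C⟩ σ (Set.mem_insert _ _)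
          (fun f hf => hclosed f (Multiset.mem_cons_of_mem hf))
          (fun f hf => ih f (Multiset.mem_cons_of_mem hf) (hclosed f (Multiset.mem_cons_of_mem hf)))
      · exact Deriv.step cl σ (Set.mem_insert_of_mem _ hmem) hclosed (fun f hf => ih f hf (hclosed f hf))
  · intro hd
    induction hd with
    | step cl σ hcl hclosed hder ih =>
      rcases Set.mem_insert_iff.mp hcl with rfl | hmem
      · -- the clause is R'
        set σ' : Nat → Trm F := Function.update σ x p0 with hσ'
        have hagree : ∀ (f : Fct P F), ¬ Fct.VarOcc x f → Fct.subst σ f = Fct.subst σ' f := by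
          intro f hf
          apply Fct.subst_congr
          intro y hy
          rw [hσ', Function.update_of_ne]
          rintro rfl; exact hf hy
        have hattsub : Fct.subst σ' (⟨att, [Trm.var x]⟩ : Fct P F) = ⟨att, [p0]⟩ := by
          simp [Fct.subst, Trm.subst, hσ']
        have hp0closed : (⟨att, [p0]⟩ : Fct P F).Closed := by
          intro t ht
          simp at ht
          subst ht; exact hp0
        have hattder : Deriv (insert (⟨(⟨att, [Trm.var x]⟩ : Fct P F) ::ₘ H, C⟩ : Clause P F) S)
            (⟨att, [p0]⟩ : Fct P F) := by
          have := Deriv.step (R := insert (⟨(⟨att, [Trm.var x]⟩ : Fct P F) ::ₘ H, C⟩ : Clause P F) S)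
            (⟨0, ⟨att, [p0]⟩⟩ : Clause P F) Trm.var (Set.mem_insert_of_mem _ hS)
            (by intro f hf; simp at hf) (by intro f hf; simp at hf)
          rwa [Fct.subst_closed _ _ hp0closed] at this
        have hconcl : Fct.subst σ C = Fct.subst σ' C := hagree C hxC
        rw [hconcl]
        apply Deriv.step ⟨(⟨att, [Trm.var x]⟩ : Fct P F) ::ₘ H, C⟩ σ' (Set.mem_insert _ _)
        · intro f hf
          rcases Multiset.mem_cons.mp hf with rfl | hfH
          · rw [hattsub]; exact hp0closed
          · rw [← hagree f (hxH f hfH)]; exact hclosed f hfH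
        · intro f hf
          rcases Multiset.mem_cons.mp hf with rfl | hfH
          · rw [hattsub]; exact hattder
          · rw [← hagree f (hxH f hfH)]; exact ih f hfH (hclosed f hfH)
      · exact Deriv.step cl σ (Set.mem_insert_of_mem _ hmem) hclosed (fun f hf => ih f hf (hclosed f hf))
end
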